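/- The space of conjugacy classes of pairs (A, a) ∈ SU(2)² with tr(a) = 0 (no relation between A and a) is homeomorphic to the closed unit disk D²; a homeomorphism sends (x,y) ∈ D² to the class of a = iσ_z, A = x + i(1-x²-y²)^{1/2} σ_x + i y σ_z. Under this homeomorphism, abelian pairs (Aa = aA) correspond to the boundary circle x² + y² = 1 and nonabelian pairs to the open disk. -/

import Mathlib

/-!
Two invariants separate the conjugacy classes: `x = Re tr A / 2` and `y = -Re tr (A a) / 2`.
They are invariant under conjugation and take the value `(x, y)` on the canonical pair
`(A(x, y), iσ_z)`. Conversely every pair is conjugate to a canonical one: a traceless element of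
SU(2) has eigenvalues `±i`, hence is conjugate to `iσ_z`; conjugating further by a diagonal
element, which centralises `iσ_z`, turns the off-diagonal entry `β` of `A` into `i|β|`, and an
element of SU(2) of that shape is some `A(x, y)`. So the invariants and the canonical pair give
mutually inverse continuous maps between the disk and the quotient. A canonical pair commutes
exactly when its `σ_x`-coefficient `√(1 - x² - y²)` vanishes.
-/

open Matrix

noncomputable section

def σx : Matrix (Fin 2) (Fin 2) ℂ := !![0, 1; 1, 0]
def σz : Matrix (Fin 2) (Fin 2) ℂ := !![1, 0; 0, -1]

abbrev SU2 := Matrix.specialUnitaryGroup (Fin 2) ℂ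

/-- Pairs `(A, a) ∈ SU(2)²` with `tr a = 0`. -/
def PairSp : Type :=
  {q : SU2 × SU2 // Matrix.trace (q.2 : Matrix (Fin 2) (Fin 2) ℂ) = 0}

/-- Simultaneous conjugation relation on such pairs. -/
def conjRel2 (q q' : PairSp) : Prop :=
  ∃ g : SU2,
    (g : Matrix (Fin 2) (Fin 2) ℂ) * q.1.1 * (g : Matrix (Fin 2) (Fin 2) ℂ)⁻¹ =
      (q'.1.1 : Matrix (Fin 2) (Fin 2) ℂ) ∧
    (g : Matrix (Fin 2) (Fin 2) ℂ) * q.1.2 * (g : Matrix (Fin 2) (Fin 2) ℂ)⁻¹ =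
      (q'.1.2 : Matrix (Fin 2) (Fin 2) ℂ)

instance : TopologicalSpace PairSp := instTopologicalSpaceSubtype

/-- The canonical matrix `A = x + i √(1-x²-y²) σx + i y σz`. -/
def canonDiskA (x y : ℝ) : Matrix (Fin 2) (Fin 2) ℂ :=
  ((x : ℝ) : ℂ) • (1 : Matrix (Fin 2) (Fin 2) ℂ) +
    (Complex.I * ((Real.sqrt (1 - x ^ 2 - y ^ 2) : ℝ) : ℂ)) • σx +
    (Complex.I * ((y : ℝ) : ℂ)) • σz

namespace SU2

open Complex ComplexConjugate

local notation "M2" => Matrix (Fin 2) (Fin 2) ℂ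

lemma coe_inv (g : SU2) : ((g⁻¹ : SU2) : M2) = (g : M2)⁻¹ :=
  (inv_eq_left_inv g.2.1.1).symm

lemma trace_conj (g A : SU2) : trace ((g * A * g⁻¹ : SU2) : M2) = trace (A : M2) := by
  rw [Submonoid.coe_mul, Submonoid.coe_mul, trace_mul_cycle, ← Submonoid.coe_mul, inv_mul_cancel,
    Submonoid.coe_one, one_mul]

lemma commute_coe_iff {A B : SU2} : Commute (A : M2) B ↔ Commute A B :=
  ⟨fun h => Subtype.ext h, congrArg Subtype.val⟩

def cayleyKlein (α β : ℂ) : M2 := !![α, β; -conj β, conj α]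

lemma cayleyKlein_inj {α β γ δ : ℂ} : cayleyKlein α β = cayleyKlein γ δ ↔ α = γ ∧ β = δ :=
  ⟨fun h => ⟨by simpa [cayleyKlein] using congrFun₂ h 0 0,
    by simpa [cayleyKlein] using congrFun₂ h 0 1⟩, by rintro ⟨rfl, rfl⟩; rfl⟩

lemma cayleyKlein_mul_cayleyKlein (α β γ δ : ℂ) :
    cayleyKlein α β * cayleyKlein γ δ =
      cayleyKlein (α * γ - β * conj δ) (α * δ + β * conj γ) := by
  ext i j
  fin_cases i <;> fin_cases j <;> simp [cayleyKlein, Matrix.mul_apply] <;> ring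

lemma cayleyKlein_ofReal_mul (r : ℝ) (α β : ℂ) :
    cayleyKlein (r * α) (r * β) = (r : ℂ) • cayleyKlein α β := by
  ext i j
  fin_cases i <;> fin_cases j <;> simp [cayleyKlein]

lemma star_cayleyKlein (α β : ℂ) : star (cayleyKlein α β) = cayleyKlein (conj α) (-β) := by
  ext i j
  fin_cases i <;> fin_cases j <;> simp [cayleyKlein, Matrix.star_apply]

lemma cayleyKlein_mul_star (α β : ℂ) :
    cayleyKlein α β * star (cayleyKlein α β) = (normSq α + normSq β : ℂ) • 1 := by
  ext i j
  fin_cases i <;> fin_cases j <;>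
    simp [cayleyKlein, Matrix.mul_apply, Matrix.star_apply, ← Complex.mul_conj] <;> ring

lemma trace_cayleyKlein (α β : ℂ) : trace (cayleyKlein α β) = 2 * α.re := by
  simpa [cayleyKlein, Matrix.trace_fin_two] using add_conj α

lemma det_cayleyKlein (α β : ℂ) : det (cayleyKlein α β) = normSq α + normSq β := by
  simp [cayleyKlein, Matrix.det_fin_two, ← Complex.mul_conj]

lemma cayleyKlein_mem_iff {α β : ℂ} : cayleyKlein α β ∈ SU2 ↔ normSq α + normSq β = 1 := by
  rw [mem_specialUnitaryGroup_iff, mem_unitaryGroup_iff, cayleyKlein_mul_star, det_cayleyKlein]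
  exact_mod_cast and_iff_right_of_imp fun h => by rw [h, one_smul]

lemma exists_eq_cayleyKlein {A : M2} (hA : A ∈ SU2) : ∃ α β, A = cayleyKlein α β := by
  obtain ⟨hU, hdet⟩ := mem_specialUnitaryGroup_iff.mp hA
  have h : star A = adjugate A := by
    rw [← inv_eq_right_inv (mem_unitaryGroup_iff.mp hU), Matrix.inv_def, hdet]
    simp
  rw [adjugate_fin_two] at h
  refine ⟨A 0 0, A 0 1, ?_⟩
  have h11 : conj (A 1 1) = A 0 0 := by simpa [Matrix.star_apply] using congrFun₂ h 1 1
  have h10 : conj (A 0 1) = -A 1 0 := by simpa [Matrix.star_apply] using congrFun₂ h 1 0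
  ext i j
  fin_cases i <;> fin_cases j <;> simp [cayleyKlein, h10, ← h11]

lemma exists_ofReal_smul_cayleyKlein_mem {γ δ : ℂ} (h : normSq γ + normSq δ ≠ 0) :
    ∃ r : ℝ, (r : ℂ) • cayleyKlein γ δ ∈ SU2 := by
  have hpos : 0 < normSq γ + normSq δ :=
    (add_nonneg (normSq_nonneg γ) (normSq_nonneg δ)).lt_of_ne' h
  refine ⟨(√(normSq γ + normSq δ))⁻¹, ?_⟩
  rw [← cayleyKlein_ofReal_mul, cayleyKlein_mem_iff, normSq_mul, normSq_mul, normSq_ofReal,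
    ← mul_add, ← sq, inv_pow, Real.sq_sqrt hpos.le, inv_mul_cancel₀ h]

lemma I_smul_σz_eq_cayleyKlein : I • σz = cayleyKlein I 0 := by
  ext i j
  fin_cases i <;> fin_cases j <;> simp [σz, cayleyKlein]

lemma I_smul_σz_mem : I • σz ∈ SU2 := by
  simp [I_smul_σz_eq_cayleyKlein, cayleyKlein_mem_iff]

lemma trace_I_smul_σz : trace (I • σz) = 0 := by
  simp [I_smul_σz_eq_cayleyKlein, trace_cayleyKlein]

lemma canonDiskA_eq_cayleyKlein (x y : ℝ) :
    canonDiskA x y = cayleyKlein (x + y * I) (√(1 - x ^ 2 - y ^ 2) * I) := by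
  ext i j
  fin_cases i <;> fin_cases j <;> simp [canonDiskA, cayleyKlein, σx, σz, Complex.ext_iff]

lemma canonDiskA_mem {x y : ℝ} (h : x ^ 2 + y ^ 2 ≤ 1) : canonDiskA x y ∈ SU2 := by
  rw [canonDiskA_eq_cayleyKlein, cayleyKlein_mem_iff, normSq_mul, normSq_ofReal, normSq_I,
    normSq_add_mul_I, Real.mul_self_sqrt (by linarith)]
  ring

lemma cayleyKlein_ofReal_mul_I_eq_canonDiskA {α : ℂ} {t : ℝ} (ht : 0 ≤ t)
    (h : normSq α + t ^ 2 = 1) : cayleyKlein α (t * I) = canonDiskA α.re α.im := by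
  rw [canonDiskA_eq_cayleyKlein, re_add_im, normSq_apply] at *
  rw [show 1 - α.re ^ 2 - α.im ^ 2 = t ^ 2 by linarith, Real.sqrt_sq ht]

lemma cayleyKlein_commute_I_smul_σz_iff {α β : ℂ} :
    Commute (cayleyKlein α β) (I • σz) ↔ β = 0 := by
  rw [Commute, SemiconjBy, I_smul_σz_eq_cayleyKlein, cayleyKlein_mul_cayleyKlein,
    cayleyKlein_mul_cayleyKlein, cayleyKlein_inj]
  simp only [map_zero, mul_zero, sub_zero, zero_mul, add_zero, zero_add, conj_I, mul_comm α I,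
    true_and, mul_neg, mul_comm β I, CharZero.neg_eq_self_iff, mul_eq_zero, I_ne_zero, false_or]

lemma exists_semiconjBy_I_smul_σz {a : M2} (ha : a ∈ SU2) (htr : trace a = 0) :
    ∃ g : SU2, SemiconjBy (g : M2) (I • σz) a := by
  obtain ⟨α, v, rfl⟩ := exists_eq_cayleyKlein ha
  have hre : α.re = 0 := by simpa [trace_cayleyKlein] using htr
  obtain ⟨u, rfl⟩ : ∃ u : ℝ, α = u * I := ⟨α.im, by simp [Complex.ext_iff, hre]⟩
  have hnorm : u ^ 2 + normSq v = 1 := by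
    simpa [sq] using cayleyKlein_mem_iff.mp ha
  rcases eq_or_ne u 1 with rfl | hu
  · have hv : v = 0 := by simpa using hnorm
    exact ⟨1, by rw [hv, I_smul_σz_eq_cayleyKlein]; simp [SemiconjBy]⟩
  -- the first column `(v, i(1 - u))` of the conjugator is an `i`-eigenvector of `a`
  have hsemiconj :
      SemiconjBy (cayleyKlein v (I * (1 - u))) (I • σz) (cayleyKlein (u * I) v) := by
    have hvv : v * conj v = 1 - u ^ 2 := by
      rw [mul_conj, show normSq v = 1 - u ^ 2 by linarith]; push_cast; ring
    rw [SemiconjBy, I_smul_σz_eq_cayleyKlein, cayleyKlein_mul_cayleyKlein,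
      cayleyKlein_mul_cayleyKlein]
    congr 1
    · simp only [map_mul, map_sub, map_one, map_zero, conj_I, conj_ofReal]; ring
    · rw [conj_I]
      linear_combination -hvv + (u ^ 2 - 1) * I_sq
  have hne : normSq v + normSq (I * (1 - u)) ≠ 0 := by
    have h1u : (1 - u : ℂ) ≠ 0 := sub_ne_zero.mpr (mod_cast hu.symm)
    exact (add_pos_of_nonneg_of_pos (normSq_nonneg v)
      (normSq_pos.mpr (mul_ne_zero I_ne_zero h1u))).ne'
  obtain ⟨r, hr⟩ := exists_ofReal_smul_cayleyKlein_mem hne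
  exact ⟨⟨_, hr⟩, hsemiconj.smul_left _⟩

lemma exists_norm_eq_one_mul_norm_mul_I (β : ℂ) :
    ∃ c : ℂ, ‖c‖ = 1 ∧ c * (‖β‖ * I) = β * conj c := by
  -- for `‖c‖ = 1` the equation reads `c² = e^{i (arg β - π / 2)}`
  set θ := arg β
  refine ⟨exp ((θ / 2 - Real.pi / 4 : ℝ) * I), norm_exp_ofReal_mul_I _, ?_⟩
  conv_rhs => rw [← norm_mul_exp_arg_mul_I β]
  calc exp ((θ / 2 - Real.pi / 4 : ℝ) * I) * (‖β‖ * I)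
      = ‖β‖ * (exp ((θ / 2 - Real.pi / 4 : ℝ) * I) * exp (Real.pi / 2 * I)) := by
        rw [exp_pi_div_two_mul_I]; ring
    _ = ‖β‖ * (exp (θ * I) * exp (conj ((θ / 2 - Real.pi / 4 : ℝ) * I))) := by
        rw [← exp_add, ← exp_add]; congr 2
        rw [map_mul, conj_ofReal, conj_I]; push_cast; ring
    _ = _ := by rw [Complex.exp_conj]; ring

lemma exists_semiconjBy_cayleyKlein_norm_mul_I (α β : ℂ) :
    ∃ g : SU2, SemiconjBy (g : M2) (cayleyKlein α (‖β‖ * I)) (cayleyKlein α β) ∧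
      Commute (g : M2) (I • σz) := by
  obtain ⟨c, hc, hcβ⟩ := exists_norm_eq_one_mul_norm_mul_I β
  have hmem : cayleyKlein c 0 ∈ SU2 := by simp [cayleyKlein_mem_iff, normSq_eq_norm_sq, hc]
  refine ⟨⟨_, hmem⟩, ?_, ?_⟩
  · rw [SemiconjBy, cayleyKlein_mul_cayleyKlein, cayleyKlein_mul_cayleyKlein]
    congr 1
    · simp only [map_zero, mul_zero, sub_zero]; ring
    · simpa only [zero_mul, add_zero, mul_zero, zero_add] using hcβ
  · exact (cayleyKlein_commute_I_smul_σz_iff (α := c)).mpr rfl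

end SU2

abbrev Disk : Type := {v : ℝ × ℝ // v.1 ^ 2 + v.2 ^ 2 ≤ 1}

namespace PairSp

open Complex SU2

local notation "M2" => Matrix (Fin 2) (Fin 2) ℂ

lemma conjRel2_iff {q q' : PairSp} :
    conjRel2 q q' ↔ ∃ g : SU2, g * q.1.1 * g⁻¹ = q'.1.1 ∧ g * q.1.2 * g⁻¹ = q'.1.2 := by
  simp only [conjRel2, Subtype.ext_iff, Submonoid.coe_mul, coe_inv]

lemma conjRel2_of_semiconjBy {q q' : PairSp} (g : SU2) (hA : SemiconjBy (g : M2) q.1.1 q'.1.1)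
    (ha : SemiconjBy (g : M2) q.1.2 q'.1.2) : conjRel2 q q' := by
  refine conjRel2_iff.mpr ⟨g, ?_, ?_⟩ <;> rw [mul_inv_eq_iff_eq_mul]
  exacts [Subtype.ext hA, Subtype.ext ha]

def canon (p : Disk) : PairSp :=
  ⟨(⟨canonDiskA p.1.1 p.1.2, canonDiskA_mem p.2⟩, ⟨I • σz, I_smul_σz_mem⟩), trace_I_smul_σz⟩

lemma exists_conjRel2_canon (q : PairSp) : ∃ p : Disk, conjRel2 (canon p) q := by
  obtain ⟨g₁, hg₁⟩ := exists_semiconjBy_I_smul_σz q.1.2.2 q.2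
  set A' := g₁⁻¹ * q.1.1 * g₁
  have hA' : SemiconjBy g₁ A' q.1.1 := by simp [A', SemiconjBy, mul_assoc]
  obtain ⟨α, β, hα⟩ := exists_eq_cayleyKlein A'.2
  have hnorm : normSq α + ‖β‖ ^ 2 = 1 := by
    rw [← normSq_eq_norm_sq, ← cayleyKlein_mem_iff, ← hα]; exact A'.2
  obtain ⟨g₂, hg₂, hg₂σ⟩ := exists_semiconjBy_cayleyKlein_norm_mul_I α β
  rw [← hα, cayleyKlein_ofReal_mul_I_eq_canonDiskA (norm_nonneg β) hnorm] at hg₂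
  refine ⟨⟨(α.re, α.im), ?_⟩, conjRel2_of_semiconjBy (g₁ * g₂) ?_ ?_⟩
  · simpa [normSq_apply, sq] using (le_add_of_nonneg_right (sq_nonneg ‖β‖)).trans hnorm.le
  · exact SemiconjBy.mul_left (congrArg Subtype.val hA') hg₂
  · exact hg₁.mul_left hg₂σ

def invariants (q : PairSp) : ℝ × ℝ :=
  ((trace (q.1.1 : M2)).re / 2, -(trace ((q.1.1 * q.1.2 : SU2) : M2)).re / 2)

lemma invariants_canon (p : Disk) : invariants (canon p) = p := by
  simp [invariants, canon, canonDiskA_eq_cayleyKlein, I_smul_σz_eq_cayleyKlein,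
    cayleyKlein_mul_cayleyKlein, trace_cayleyKlein]

lemma invariants_eq_of_conjRel2 {q q' : PairSp} (h : conjRel2 q q') :
    invariants q = invariants q' := by
  obtain ⟨g, hA, ha⟩ := conjRel2_iff.mp h
  have hAa : q'.1.1 * q'.1.2 = g * (q.1.1 * q.1.2) * g⁻¹ := by rw [← hA, ← ha]; group
  rw [invariants, invariants, hAa, ← hA, trace_conj, trace_conj]

lemma commute_iff_of_conjRel2 {q q' : PairSp} (h : conjRel2 q q') :
    Commute q.1.1 q.1.2 ↔ Commute q'.1.1 q'.1.2 := by
  obtain ⟨g, hA, ha⟩ := conjRel2_iff.mp h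
  rw [← hA, ← ha, Commute.conj_iff]

lemma commute_canon_iff (p : Disk) :
    Commute (canon p).1.1 (canon p).1.2 ↔ p.1.1 ^ 2 + p.1.2 ^ 2 = 1 := by
  rw [← commute_coe_iff]
  change Commute (canonDiskA p.1.1 p.1.2) (I • σz) ↔ _
  rw [canonDiskA_eq_cayleyKlein, cayleyKlein_commute_I_smul_σz_iff, mul_eq_zero,
    or_iff_left I_ne_zero, ofReal_eq_zero, Real.sqrt_eq_zero', sub_sub, sub_nonpos]
  exact ⟨p.2.antisymm, ge_of_eq⟩

lemma continuous_canon : Continuous canon := by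
  unfold canon canonDiskA
  fun_prop

lemma continuous_invariants : Continuous invariants := by
  unfold invariants
  fun_prop

lemma invariants_mem_disk (q : PairSp) : (invariants q).1 ^ 2 + (invariants q).2 ^ 2 ≤ 1 := by
  obtain ⟨p, hp⟩ := exists_conjRel2_canon q
  rw [← invariants_eq_of_conjRel2 hp, invariants_canon]
  exact p.2

def toDisk (q : PairSp) : Disk :=
  ⟨invariants q, invariants_mem_disk q⟩

lemma toDisk_canon (p : Disk) : toDisk (canon p) = p :=
  Subtype.ext (invariants_canon p)

lemma toDisk_eq_of_conjRel2 {q q' : PairSp} (h : conjRel2 q q') : toDisk q = toDisk q' :=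
  Subtype.ext (invariants_eq_of_conjRel2 h)

lemma commute_iff_of_mk_eq {q q' : PairSp} (h : Quot.mk conjRel2 q = Quot.mk conjRel2 q') :
    Commute q.1.1 q.1.2 ↔ Commute q'.1.1 q'.1.2 :=
  Iff.of_eq <| congrArg (Quot.lift (fun q : PairSp => Commute q.1.1 q.1.2)
    fun _ _ h => propext (commute_iff_of_conjRel2 h)) h

end PairSp

open PairSp in
def diskHomeomorph : Disk ≃ₜ Quot conjRel2 where
  toFun p := Quot.mk _ (canon p)
  invFun := Quot.lift toDisk fun _ _ => toDisk_eq_of_conjRel2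
  left_inv := toDisk_canon
  right_inv := Function.LeftInverse.rightInverse_of_surjective toDisk_canon <|
    Quot.ind fun q => (exists_conjRel2_canon q).imp fun _ => Quot.sound
  continuous_toFun := continuous_quot_mk.comp continuous_canon
  continuous_invFun := continuous_quot_lift _ (continuous_invariants.subtype_mk _)

open PairSp in
/-- The space of conjugacy classes of pairs `(A,a) ∈ SU(2)²` with `tr a = 0` is
homeomorphic to the closed unit disk via `(x,y) ↦ [(A(x,y), iσz)]`; abelian pairs
correspond to the boundary circle and nonabelian pairs to the open disk. -/
theorem disk_character_variety :
    ∃ F : {v : ℝ × ℝ // v.1 ^ 2 + v.2 ^ 2 ≤ 1} ≃ₜ Quot conjRel2,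
      (∀ (p : {v : ℝ × ℝ // v.1 ^ 2 + v.2 ^ 2 ≤ 1}) (q : PairSp),
        (q.1.1 : Matrix (Fin 2) (Fin 2) ℂ) = canonDiskA p.1.1 p.1.2 →
        (q.1.2 : Matrix (Fin 2) (Fin 2) ℂ) = Complex.I • σz →
        F p = Quot.mk conjRel2 q) ∧
      (∀ (p : {v : ℝ × ℝ // v.1 ^ 2 + v.2 ^ 2 ≤ 1}) (q : PairSp),
        F p = Quot.mk conjRel2 q →
        (p.1.1 ^ 2 + p.1.2 ^ 2 = 1 ↔
          (q.1.1 : Matrix (Fin 2) (Fin 2) ℂ) * q.1.2 =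
            (q.1.2 : Matrix (Fin 2) (Fin 2) ℂ) * q.1.1)) := by
  refine ⟨diskHomeomorph, fun p q hA ha => ?_, fun p q h => ?_⟩
  · have hq : canon p = q := Subtype.ext (Prod.ext (Subtype.ext hA.symm) (Subtype.ext ha.symm))
    exact congrArg (Quot.mk conjRel2) hq
  · rw [← commute_canon_iff, commute_iff_of_mk_eq h, ← SU2.commute_coe_iff]
    rfl
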